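/- arXiv:0807.0926 — 3 statements merged into one kernel-verified Lean document; each statement's English description precedes it below -/
import Mathlib

section
/- Let (ℂ_n)_{n∈ℤ} be a filtration of partitions of a σ-finite measure space Ω with μ(Ω) = ∞ and regularity constant N₀. Suppose 0 ≤ u ≤ v are integrable and g ≥ 0 is measurable, and for every n ∈ ℤ and every C ∈ ℂ_n one has ∫_C (u - v_C)_+ dμ ≤ ∫_C g dμ. Then for every λ > 0, μ({x : u(x) ≥ λ}) ≤ (2/λ) ∫_Ω g(x) 1_{Mv(x) > λ/(2N₀)} dμ(x), where Mv = sup_n v_{|n} is the maximal function relative to the filtration. -/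
/-!
Stopping-time (Calderón–Zygmund) argument at height `t = λ / (2 N₀)`. Since averages of `v` tend
to `0` along coarser partitions, every point of `{Mv > t}` lies in a maximal cell `C` whose
average exceeds `t`; these cells are disjoint and cover `{Mv > t}`. The parent of `C` has average
at most `t`, so by regularity `v_C ≤ N₀ t = λ / 2`, and Chebyshev applied to `(u - v_C)_+` with
the hypothesis gives `μ(C ∩ {u ≥ λ}) ≤ (2/λ) ∫_C g`. Summing over the cells proves the claim,
because `u ≤ Mv` a.e. (averages converge) puts `{u ≥ λ}` inside `{Mv > t}` up to a null set.
-/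

open MeasureTheory Filter
open scoped ENNReal Topology

/-- A filtration of partitions of a measure space `Ω`, with regularity constant `N₀`.
`part n` is the partition `ℂ_n`, consisting of countably many disjoint measurable sets
of finite positive measure; `elem n x` is the element `C_n(x)` of `ℂ_n` containing `x`.
The partitions are nested, a parent has measure at most `N₀` times that of a child,
the elements become large as `n → -∞`, and the averages over `C_n(x)` converge a.e.
to the function as `n → ∞`. -/
structure FiltrationOfPartitions (Ω : Type) [MeasurableSpace Ω] (μ : Measure Ω)
    (N₀ : ℝ) where
  part : ℤ → Set (Set Ω)
  countable : ∀ n, (part n).Countable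
  meas : ∀ n, ∀ C ∈ part n, MeasurableSet C
  finite : ∀ n, ∀ C ∈ part n, μ C < ⊤
  pos : ∀ n, ∀ C ∈ part n, 0 < μ C
  disj : ∀ n, (part n).PairwiseDisjoint id
  elem : ℤ → Ω → Set Ω
  elem_mem : ∀ n x, elem n x ∈ part n ∧ x ∈ elem n x
  nested : ∀ n x, elem n x ⊆ elem (n - 1) x
  reg : ∀ n x, μ (elem (n - 1) x) ≤ ENNReal.ofReal N₀ * μ (elem n x)
  large : ∀ M : ℝ, ∃ m : ℤ, ∀ n : ℤ, n ≤ m → ∀ C ∈ part n, ENNReal.ofReal M ≤ μ C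
  conv : ∀ f : Ω → ℝ, Integrable f μ →
    ∀ᵐ x ∂μ, Tendsto (fun n : ℤ => ⨍ y in elem n x, f y ∂μ) atTop (𝓝 (f x))

/-- The maximal function `Mv = sup_n v_{|n}` relative to a filtration of partitions. -/
noncomputable def FiltrationOfPartitions.maximal {Ω : Type} [MeasurableSpace Ω]
    {μ : Measure Ω} {N₀ : ℝ} (F : FiltrationOfPartitions Ω μ N₀) (v : Ω → ℝ)
    (x : Ω) : ℝ≥0∞ :=
  ⨆ n : ℤ, ENNReal.ofReal (⨍ y in F.elem n x, v y ∂μ)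


section Averages

variable {Ω : Type*} [MeasurableSpace Ω] {μ : Measure Ω}

lemma setAverage_le_mul_setAverage_of_subset {f : Ω → ℝ} {s t : Set Ω} {K : ℝ}
    (hf : IntegrableOn f t μ) (hf0 : ∀ x, 0 ≤ f x) (hst : s ⊆ t) (hs : 0 < μ.real s)
    (ht : μ t ≠ ⊤) (hK : μ.real t ≤ K * μ.real s) :
    ⨍ x in s, f x ∂μ ≤ K * ⨍ x in t, f x ∂μ := by
  have havg_t : 0 ≤ ⨍ x in t, f x ∂μ := by
    rw [setAverage_eq, smul_eq_mul]
    exact mul_nonneg (by positivity) (integral_nonneg hf0)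
  rw [setAverage_eq, smul_eq_mul, inv_mul_le_iff₀ hs]
  calc ∫ x in s, f x ∂μ ≤ ∫ x in t, f x ∂μ :=
        setIntegral_mono_set hf (ae_of_all _ hf0) hst.eventuallyLE
    _ = μ.real t * ⨍ x in t, f x ∂μ := (measure_smul_setAverage f ht).symm
    _ ≤ K * μ.real s * ⨍ x in t, f x ∂μ := mul_le_mul_of_nonneg_right hK havg_t
    _ = μ.real s * (K * ⨍ x in t, f x ∂μ) := by ring

lemma ofReal_integral_le_lintegral_ofReal {f : Ω → ℝ} (hf0 : 0 ≤ᵐ[μ] f) :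
    ENNReal.ofReal (∫ x, f x ∂μ) ≤ ∫⁻ x, ENNReal.ofReal (f x) ∂μ := by
  by_cases hf : Integrable f μ
  · exact (ofReal_integral_eq_lintegral_ofReal hf hf0).le
  · simp [integral_undef hf]

lemma measure_inter_le_of_integral_posPart_le {u g : Ω → ℝ} {C : Set Ω} {a lam : ℝ}
    (hu : IntegrableOn u C μ) (hC : μ C ≠ ⊤) (hg0 : ∀ x, 0 ≤ g x)
    (hlam : 0 < lam) (ha : a ≤ lam / 2)
    (h : ∫ x in C, max (u x - a) 0 ∂μ ≤ ∫ x in C, g x ∂μ) :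
    μ ({x | lam ≤ u x} ∩ C) ≤
      ENNReal.ofReal (2 / lam) * ∫⁻ x in C, ENNReal.ofReal (g x) ∂μ := by
  have hpos : IntegrableOn (fun x => max (u x - a) 0) C μ :=
    (hu.sub (integrableOn_const hC)).pos_part
  calc μ ({x | lam ≤ u x} ∩ C) ≤ μ.restrict C {x | lam ≤ u x} := Measure.le_restrict_apply _ _
    _ ≤ ENNReal.ofReal (∫ x in C, 2 / lam * max (u x - a) 0 ∂μ) := by
        refine (hpos.const_mul (2 / lam)).measure_le_integral
          (ae_of_all _ fun x => by positivity) fun x hx => ?_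
        rw [div_mul_eq_mul_div, le_div_iff₀ hlam]
        have hux : lam ≤ u x := hx
        linarith [le_max_left (u x - a) 0]
    _ ≤ ENNReal.ofReal (2 / lam * ∫ x in C, g x ∂μ) := by
        rw [integral_const_mul]
        exact ENNReal.ofReal_le_ofReal (mul_le_mul_of_nonneg_left h (by positivity))
    _ ≤ ENNReal.ofReal (2 / lam) * ∫⁻ x in C, ENNReal.ofReal (g x) ∂μ := by
        rw [ENNReal.ofReal_mul (by positivity)]
        gcongr
        exact ofReal_integral_le_lintegral_ofReal (ae_of_all _ hg0)

lemma measure_inter_sUnion_le_mul_lintegral {𝒞 : Set (Set Ω)} {S : Set Ω} {f : Ω → ℝ≥0∞}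
    {c : ℝ≥0∞} (h𝒞 : 𝒞.Countable) (hmeas : ∀ C ∈ 𝒞, MeasurableSet C) (hdisj : 𝒞.PairwiseDisjoint id)
    (hS : ∀ C ∈ 𝒞, μ (S ∩ C) ≤ c * ∫⁻ x in C, f x ∂μ) :
    μ (S ∩ ⋃₀ 𝒞) ≤ c * ∫⁻ x in ⋃₀ 𝒞, f x ∂μ := by
  rw [Set.sUnion_eq_biUnion, Set.inter_iUnion₂, lintegral_biUnion h𝒞 hmeas hdisj,
    ← ENNReal.tsum_mul_left]
  exact (measure_biUnion_le μ h𝒞 _).trans (ENNReal.tsum_le_tsum fun C => hS C C.2)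

end Averages

namespace FiltrationOfPartitions

variable {Ω : Type} [MeasurableSpace Ω] {μ : Measure Ω} {N₀ : ℝ}
  (F : FiltrationOfPartitions Ω μ N₀)

/-- The average `f_{|n}(x) = f_{C_n(x)}`. -/
noncomputable def avg (f : Ω → ℝ) (n : ℤ) (x : Ω) : ℝ := ⨍ y in F.elem n x, f y ∂μ

lemma measurableSet_elem (n : ℤ) (x : Ω) : MeasurableSet (F.elem n x) :=
  F.meas n _ (F.elem_mem n x).1

lemma measure_elem_ne_top (n : ℤ) (x : Ω) : μ (F.elem n x) ≠ ⊤ :=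
  (F.finite n _ (F.elem_mem n x).1).ne

lemma measureReal_elem_pos (n : ℤ) (x : Ω) : 0 < μ.real (F.elem n x) :=
  ENNReal.toReal_pos (F.pos n _ (F.elem_mem n x).1).ne' (F.measure_elem_ne_top n x)

lemma elem_eq_of_mem {n : ℤ} {x y : Ω} (hy : y ∈ F.elem n x) : F.elem n y = F.elem n x :=
  (F.disj n).elim (F.elem_mem n y).1 (F.elem_mem n x).1
    (fun hd => Set.not_disjoint_iff.2 ⟨y, (F.elem_mem n y).2, hy⟩ hd)

lemma elem_subset_of_le {m n : ℤ} (h : m ≤ n) (x : Ω) : F.elem n x ⊆ F.elem m x := by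
  induction n, h using Int.leInduction with
  | base => exact subset_rfl
  | succ k _ ih => exact (by simpa using F.nested (k + 1) x : F.elem (k + 1) x ⊆ _).trans ih

lemma avg_eq_of_mem {f : Ω → ℝ} {m n : ℤ} {x y : Ω} (hy : y ∈ F.elem n x) (hmn : m ≤ n) :
    F.avg f m y = F.avg f m x := by
  rw [avg, avg, F.elem_eq_of_mem (F.elem_subset_of_le hmn x hy)]

lemma measureReal_elem_sub_one_le (n : ℤ) (x : Ω) :
    μ.real (F.elem (n - 1) x) ≤ N₀ * μ.real (F.elem n x) := by
  have h := ENNReal.toReal_mono (ENNReal.mul_ne_top ENNReal.ofReal_ne_top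
    (F.measure_elem_ne_top n x)) (F.reg n x)
  rw [ENNReal.toReal_mul, ENNReal.toReal_ofReal'] at h
  rcases le_total 0 N₀ with hN₀ | hN₀
  · rwa [max_eq_left hN₀] at h
  · rw [max_eq_right hN₀, zero_mul] at h
    exact absurd h (F.measureReal_elem_pos _ x).not_ge

lemma regConst_pos (F : FiltrationOfPartitions Ω μ N₀) (x : Ω) : 0 < N₀ :=
  pos_of_mul_pos_left ((F.measureReal_elem_pos (0 - 1) x).trans_le
    (F.measureReal_elem_sub_one_le 0 x)) (F.measureReal_elem_pos 0 x).le

lemma ofReal_avg_le_maximal (v : Ω → ℝ) (n : ℤ) (x : Ω) :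
    ENNReal.ofReal (F.avg v n x) ≤ F.maximal v x :=
  le_iSup (fun n => ENNReal.ofReal (F.avg v n x)) n

lemma exists_avg_le {v : Ω → ℝ} (hv : Integrable v μ) {t : ℝ} (ht : 0 < t) :
    ∃ m : ℤ, ∀ n ≤ m, ∀ x, F.avg v n x ≤ t := by
  set I := ∫ y, |v y| ∂μ
  obtain ⟨m, hm⟩ := F.large (I / t)
  refine ⟨m, fun n hn x => ?_⟩
  have hI : I ≤ μ.real (F.elem n x) * t := by
    have h := ENNReal.toReal_mono (F.measure_elem_ne_top n x) (hm n hn _ (F.elem_mem n x).1)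
    rwa [ENNReal.toReal_ofReal (by positivity), div_le_iff₀ ht] at h
  rw [avg, setAverage_eq, smul_eq_mul, inv_mul_le_iff₀ (F.measureReal_elem_pos n x)]
  calc ∫ y in F.elem n x, v y ∂μ ≤ ∫ y in F.elem n x, |v y| ∂μ :=
        setIntegral_mono hv.integrableOn hv.abs.integrableOn fun y => le_abs_self _
    _ ≤ I := setIntegral_le_integral hv.abs (ae_of_all _ fun y => abs_nonneg _)
    _ ≤ _ := hI

def IsStopIndex (v : Ω → ℝ) (t : ℝ) (x : Ω) (n : ℤ) : Prop :=
  t < F.avg v n x ∧ ∀ m < n, F.avg v m x ≤ t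

variable {F}

lemma IsStopIndex.unique {v : Ω → ℝ} {t : ℝ} {x : Ω} {n₁ n₂ : ℤ}
    (h₁ : F.IsStopIndex v t x n₁) (h₂ : F.IsStopIndex v t x n₂) : n₁ = n₂ := by
  rcases lt_trichotomy n₁ n₂ with h | h | h
  · exact absurd (h₂.2 n₁ h) h₁.1.not_ge
  · exact h
  · exact absurd (h₁.2 n₂ h) h₂.1.not_ge

lemma IsStopIndex.of_mem {v : Ω → ℝ} {t : ℝ} {x z : Ω} {n : ℤ}
    (h : F.IsStopIndex v t x n) (hz : z ∈ F.elem n x) : F.IsStopIndex v t z n :=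
  ⟨F.avg_eq_of_mem hz le_rfl ▸ h.1,
    fun m hm => F.avg_eq_of_mem hz hm.le ▸ h.2 m hm⟩

variable (F)

lemma exists_isStopIndex {v : Ω → ℝ} (hv : Integrable v μ) {t : ℝ} (ht : 0 < t) {x : Ω}
    (hx : ENNReal.ofReal t < F.maximal v x) : ∃ n, F.IsStopIndex v t x n := by
  obtain ⟨n, hn⟩ := lt_iSup_iff.1 hx
  obtain ⟨m, hm⟩ := F.exists_avg_le hv ht
  obtain ⟨n₀, hn₀, hleast⟩ := Int.exists_least_of_bdd
    ⟨m + 1, fun k hk => by by_contra! hkm; exact (hm k (by omega) x).not_gt hk⟩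
    ⟨n, ((ENNReal.ofReal_lt_ofReal_iff_of_nonneg ht.le).1 hn)⟩
  exact ⟨n₀, hn₀, fun k hk => not_lt.1 fun hk' => (hleast k hk').not_gt hk⟩

/-- The maximal cells of the filtration on which the average of `v` exceeds `t`. -/
def stopCells (v : Ω → ℝ) (t : ℝ) : Set (Set Ω) :=
  {C | ∃ n x, F.IsStopIndex v t x n ∧ F.elem n x = C}

lemma countable_stopCells (v : Ω → ℝ) (t : ℝ) : (F.stopCells v t).Countable :=
  (Set.countable_iUnion F.countable).mono fun _ ⟨n, x, _, hC⟩ =>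
    Set.mem_iUnion.2 ⟨n, hC ▸ (F.elem_mem n x).1⟩

lemma measurableSet_of_mem_stopCells {v : Ω → ℝ} {t : ℝ} {C : Set Ω}
    (hC : C ∈ F.stopCells v t) : MeasurableSet C := by
  obtain ⟨n, x, -, rfl⟩ := hC
  exact F.measurableSet_elem n x

lemma pairwiseDisjoint_stopCells (v : Ω → ℝ) (t : ℝ) :
    (F.stopCells v t).PairwiseDisjoint id := by
  rintro _ ⟨n₁, x₁, h₁, rfl⟩ _ ⟨n₂, x₂, h₂, rfl⟩ hne
  refine Set.disjoint_left.2 fun z hz₁ hz₂ => hne ?_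
  obtain rfl := (h₁.of_mem hz₁).unique (h₂.of_mem hz₂)
  rw [← F.elem_eq_of_mem hz₁, F.elem_eq_of_mem hz₂]

lemma sUnion_stopCells {v : Ω → ℝ} (hv : Integrable v μ) {t : ℝ} (ht : 0 < t) :
    ⋃₀ F.stopCells v t = {x | ENNReal.ofReal t < F.maximal v x} := by
  ext z
  constructor
  · rintro ⟨_, ⟨n, x, hx, rfl⟩, hz⟩
    exact ((ENNReal.ofReal_lt_ofReal_iff_of_nonneg ht.le).2 (hx.of_mem hz).1).trans_le
      (F.ofReal_avg_le_maximal v n z)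
  · intro hz
    obtain ⟨n, hn⟩ := F.exists_isStopIndex hv ht hz
    exact ⟨F.elem n z, ⟨n, z, hn, rfl⟩, (F.elem_mem n z).2⟩

lemma setAverage_le_of_mem_stopCells {v : Ω → ℝ} (hv : Integrable v μ) (hv0 : ∀ x, 0 ≤ v x)
    {t : ℝ} {C : Set Ω} (hC : C ∈ F.stopCells v t) : ⨍ y in C, v y ∂μ ≤ N₀ * t := by
  obtain ⟨n, x, hx, rfl⟩ := hC
  calc ⨍ y in F.elem n x, v y ∂μ ≤ N₀ * F.avg v (n - 1) x :=
        setAverage_le_mul_setAverage_of_subset hv.integrableOn hv0 (F.nested n x)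
          (F.measureReal_elem_pos n x) (F.measure_elem_ne_top _ x)
          (F.measureReal_elem_sub_one_le n x)
    _ ≤ N₀ * t := mul_le_mul_of_nonneg_left (hx.2 _ (by omega)) (F.regConst_pos x).le

lemma ae_ofReal_le_maximal {u v : Ω → ℝ} (hu : Integrable u μ) (hv : Integrable v μ)
    (huv : ∀ x, u x ≤ v x) : ∀ᵐ x ∂μ, ENNReal.ofReal (u x) ≤ F.maximal v x := by
  filter_upwards [F.conv u hu] with x hx
  refine le_of_tendsto ((ENNReal.continuous_ofReal.tendsto (u x)).comp hx)
    (Eventually.of_forall fun n => (ENNReal.ofReal_le_ofReal ?_).trans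
      (F.ofReal_avg_le_maximal v n x))
  show ⨍ y in F.elem n x, u y ∂μ ≤ ⨍ y in F.elem n x, v y ∂μ
  rw [setAverage_eq, setAverage_eq, smul_eq_mul, smul_eq_mul]
  exact mul_le_mul_of_nonneg_left (setIntegral_mono hu.integrableOn hv.integrableOn huv)
    (by positivity)

lemma measure_setOf_le_sdiff_maximal_eq_zero {u v : Ω → ℝ} (hu : Integrable u μ)
    (hv : Integrable v μ) (huv : ∀ x, u x ≤ v x) {t lam : ℝ} (ht : 0 ≤ t) (htlam : t < lam) :
    μ ({x | lam ≤ u x} \ {x | ENNReal.ofReal t < F.maximal v x}) = 0 := by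
  refine measure_mono_null ?_ (ae_iff.1 (F.ae_ofReal_le_maximal hu hv huv))
  rintro x ⟨hx, hxt⟩ hmax
  exact hxt (((ENNReal.ofReal_lt_ofReal_iff_of_nonneg ht).2 (htlam.trans_le hx)).trans_le hmax)

end FiltrationOfPartitions

theorem stmt3_general {Ω : Type} [MeasurableSpace Ω] (μ : Measure Ω)
    (N₀ : ℝ) (hN₀ : 1 ≤ N₀)
    (F : FiltrationOfPartitions Ω μ N₀) (u v g : Ω → ℝ)
    (hu : Integrable u μ) (hv : Integrable v μ)
    (hg0 : ∀ x, 0 ≤ g x)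
    (h0u : ∀ x, 0 ≤ u x) (huv : ∀ x, u x ≤ v x)
    (hmain : ∀ n : ℤ, ∀ C ∈ F.part n,
      ∫ x in C, max (u x - ⨍ y in C, v y ∂μ) 0 ∂μ ≤ ∫ x in C, g x ∂μ)
    (lam : ℝ) (hlam : 0 < lam) :
    μ {x | lam ≤ u x} ≤ ENNReal.ofReal (2 / lam) *
      ∫⁻ x in {x | ENNReal.ofReal (lam / (2 * N₀)) < F.maximal v x},
        ENNReal.ofReal (g x) ∂μ := by
  set t := lam / (2 * N₀) with ht_def
  have ht : 0 < t := by positivity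
  have ht_lt : t < lam := by
    rw [div_lt_iff₀ (by positivity)]; nlinarith
  have hNt : N₀ * t = lam / 2 := by rw [ht_def]; field_simp
  set S := {x | lam ≤ u x}
  set E := {x | ENNReal.ofReal t < F.maximal v x}
  have hcell : ∀ C ∈ F.stopCells v t,
      μ (S ∩ C) ≤ ENNReal.ofReal (2 / lam) * ∫⁻ x in C, ENNReal.ofReal (g x) ∂μ := by
    intro C hC
    have havg := hNt ▸ F.setAverage_le_of_mem_stopCells hv (fun x => (h0u x).trans (huv x)) hC
    obtain ⟨n, x, -, rfl⟩ := hC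
    exact measure_inter_le_of_integral_posPart_le hu.integrableOn (F.measure_elem_ne_top n x)
      hg0 hlam havg (hmain n _ (F.elem_mem n x).1)
  calc μ S ≤ μ (S ∩ E) + μ (S \ E) := measure_le_inter_add_sdiff _ _ _
    _ = μ (S ∩ ⋃₀ F.stopCells v t) := by
        rw [F.measure_setOf_le_sdiff_maximal_eq_zero hu hv huv ht.le ht_lt, add_zero,
          F.sUnion_stopCells hv ht]
    _ ≤ _ := measure_inter_sUnion_le_mul_lintegral (F.countable_stopCells v t)
          (fun _ => F.measurableSet_of_mem_stopCells) (F.pairwiseDisjoint_stopCells v t) hcell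
    _ = _ := by rw [F.sUnion_stopCells hv ht]

theorem stmt3 {Ω : Type} [MeasurableSpace Ω] (μ : Measure Ω) [SigmaFinite μ]
    (hμ : μ Set.univ = ⊤) (N₀ : ℝ) (hN₀ : 1 ≤ N₀)
    (F : FiltrationOfPartitions Ω μ N₀) (u v g : Ω → ℝ)
    (hu : Integrable u μ) (hv : Integrable v μ)
    (hg0 : ∀ x, 0 ≤ g x) (hgm : Measurable g)
    (h0u : ∀ x, 0 ≤ u x) (huv : ∀ x, u x ≤ v x)
    (hmain : ∀ n : ℤ, ∀ C ∈ F.part n,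
      ∫ x in C, max (u x - ⨍ y in C, v y ∂μ) 0 ∂μ ≤ ∫ x in C, g x ∂μ)
    (lam : ℝ) (hlam : 0 < lam) :
    μ {x | lam ≤ u x} ≤ ENNReal.ofReal (2 / lam) *
      ∫⁻ x in {x | ENNReal.ofReal (lam / (2 * N₀)) < F.maximal v x},
        ENNReal.ofReal (g x) ∂μ :=
  stmt3_general μ N₀ hN₀ F u v g hu hv hg0 h0u huv hmain lam hlam
end

section
/- Let κ ≥ 4 and for r ∈ ℕ set Q_r = (κ^{-r}/2, κ^{-r})² ⊂ ℝ². If Q = I × J is a square that intersects Q_τ for some minimal integer τ ≥ 0, then for every integer i ≥ τ+1 with Q ∩ Q_i ≠ ∅, both side lengths of Q are at least κ^{-τ}/4, and consequently |Q ∩ Q_i| ≤ 4 κ^{2τ-2i}|Q|; hence Σ_{i=τ+1}^∞ |Q ∩ Q_i| ≤ 4(κ²-1)^{-1}|Q|. -/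
/-! A square meeting both `Q_τ` and some `Q_i` with `i > τ` contains a point with coordinate
`> κ^{-τ}/2` and one with coordinate `< κ^{-i} ≤ κ^{-τ}/4`, so its side is at least `κ^{-τ}/4`.
Then `|Q ∩ Q_i| ≤ |Q_i| = κ^{-2i}/4 = 4 κ^{2τ-2i} (κ^{-τ}/4)² ≤ 4 κ^{2τ-2i} |Q|`, and summing the
geometric series `∑_{i>τ} 4 κ^{2τ-2i} = 4/(κ²-1)` gives the last bound. -/

open MeasureTheory
open scoped ENNReal

/-- The square `Q_r = (κ^{-r}/2, κ^{-r})² ⊂ ℝ²`. -/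
def Qr (κ : ℝ) (r : ℕ) : Set (ℝ × ℝ) :=
  Set.Ioo (κ ^ (-(r : ℤ)) / 2) (κ ^ (-(r : ℤ))) ×ˢ
    Set.Ioo (κ ^ (-(r : ℤ)) / 2) (κ ^ (-(r : ℤ)))

open Set

lemma volume_Ioo_prod_Ioo (a b c d : ℝ) :
    volume (Ioo a b ×ˢ Ioo c d) = ENNReal.ofReal (b - a) * ENNReal.ofReal (d - c) := by
  rw [Measure.volume_eq_prod, Measure.prod_prod, Real.volume_Ioo, Real.volume_Ioo]

lemma volume_square (a b : ℝ) {s : ℝ} (hs : 0 ≤ s) :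
    volume (Ioo a (a + s) ×ˢ Ioo b (b + s)) = ENNReal.ofReal (s ^ 2) := by
  rw [volume_Ioo_prod_Ioo, add_sub_cancel_left, add_sub_cancel_left, ← ENNReal.ofReal_mul hs, sq]

lemma volume_Qr {κ : ℝ} (hκ : 0 ≤ κ) (r : ℕ) :
    volume (Qr κ r) = ENNReal.ofReal ((κ ^ (-(r : ℤ)) / 2) ^ 2) := by
  rw [Qr, volume_Ioo_prod_Ioo, sub_half, ← ENNReal.ofReal_mul (by positivity), sq]

lemma zpow_neg_le_zpow_neg_div_four {κ : ℝ} (hκ : 4 ≤ κ) {τ i : ℕ} (hi : τ < i) :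
    κ ^ (-(i : ℤ)) ≤ κ ^ (-(τ : ℤ)) / 4 := by
  have hκ0 : 0 < κ := by linarith
  calc κ ^ (-(i : ℤ)) ≤ κ ^ (-(τ : ℤ) - 1) := zpow_le_zpow_right₀ (by linarith) (by omega)
    _ = κ ^ (-(τ : ℤ)) / κ := by rw [zpow_sub₀ hκ0.ne', zpow_one]
    _ ≤ κ ^ (-(τ : ℤ)) / 4 := div_le_div_of_nonneg_left (by positivity) (by norm_num) hκ

lemma zpow_neg_div_four_le_side {κ a b s : ℝ} (hκ : 4 ≤ κ) {τ i : ℕ} (hi : τ < i)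
    (hτ : (Ioo a (a + s) ×ˢ Ioo b (b + s) ∩ Qr κ τ).Nonempty)
    (hQi : (Ioo a (a + s) ×ˢ Ioo b (b + s) ∩ Qr κ i).Nonempty) :
    κ ^ (-(τ : ℤ)) / 4 ≤ s := by
  obtain ⟨p, ⟨⟨hpa, hps⟩, -⟩, ⟨hpτ, -⟩, -⟩ := hτ
  obtain ⟨q, ⟨⟨hqa, hqs⟩, -⟩, ⟨-, hqi⟩, -⟩ := hQi
  linarith [zpow_neg_le_zpow_neg_div_four hκ hi]

lemma volume_inter_Qr_le {κ a b s : ℝ} (hκ : 0 < κ) {τ : ℕ} (hs : κ ^ (-(τ : ℤ)) / 4 ≤ s)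
    (i : ℕ) :
    volume (Ioo a (a + s) ×ˢ Ioo b (b + s) ∩ Qr κ i) ≤
      ENNReal.ofReal (4 * κ ^ (2 * (τ : ℤ) - 2 * (i : ℤ))) *
        volume (Ioo a (a + s) ×ˢ Ioo b (b + s)) := by
  have hsplit : κ ^ (-(i : ℤ)) / 2 = 2 * κ ^ ((τ : ℤ) - i) * (κ ^ (-(τ : ℤ)) / 4) := by
    rw [mul_assoc, mul_div_assoc', ← zpow_add₀ hκ.ne']
    ring_nf
  have hsq : (κ ^ ((τ : ℤ) - i)) ^ 2 = κ ^ (2 * (τ : ℤ) - 2 * (i : ℤ)) := by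
    rw [← zpow_natCast, ← zpow_mul]
    ring_nf
  have hreal : (κ ^ (-(i : ℤ)) / 2) ^ 2 ≤ 4 * κ ^ (2 * (τ : ℤ) - 2 * (i : ℤ)) * s ^ 2 := by
    rw [hsplit, mul_pow, mul_pow, hsq]
    gcongr
    norm_num
  calc volume (Ioo a (a + s) ×ˢ Ioo b (b + s) ∩ Qr κ i) ≤ volume (Qr κ i) :=
        measure_mono inter_subset_right
    _ = ENNReal.ofReal ((κ ^ (-(i : ℤ)) / 2) ^ 2) := volume_Qr hκ.le i
    _ ≤ ENNReal.ofReal (4 * κ ^ (2 * (τ : ℤ) - 2 * (i : ℤ)) * s ^ 2) :=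
        ENNReal.ofReal_le_ofReal hreal
    _ = _ := by
        rw [volume_square a b ((by positivity : (0 : ℝ) ≤ _).trans hs),
          ENNReal.ofReal_mul (by positivity)]

lemma hasSum_four_mul_zpow {κ : ℝ} (hκ : 1 < κ) (τ : ℕ) :
    HasSum (fun i : ℕ ↦ 4 * κ ^ (2 * (τ : ℤ) - 2 * ((τ + 1 + i : ℕ) : ℤ))) (4 / (κ ^ 2 - 1)) := by
  have hκ2 : 1 < κ ^ 2 := one_lt_pow₀ hκ two_ne_zero
  have hterm : ∀ i : ℕ, 4 * κ ^ (2 * (τ : ℤ) - 2 * ((τ + 1 + i : ℕ) : ℤ)) =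
      4 * (κ ^ 2)⁻¹ * (κ ^ 2)⁻¹ ^ i := by
    intro i
    rw [show 2 * (τ : ℤ) - 2 * ((τ + 1 + i : ℕ) : ℤ) = -((2 * (i + 1) : ℕ) : ℤ) by push_cast; ring,
      zpow_neg, zpow_natCast, pow_mul, ← inv_pow, pow_succ']
    ring
  have hsum : 4 * (κ ^ 2)⁻¹ * (1 - (κ ^ 2)⁻¹)⁻¹ = 4 / (κ ^ 2 - 1) := by
    field_simp
  rw [funext hterm, ← hsum]
  exact (hasSum_geometric_of_lt_one (by positivity) (inv_lt_one_of_one_lt₀ hκ2)).mul_left _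

theorem stmt10_general (κ : ℝ) (hκ : 4 ≤ κ) (a b s : ℝ)
    (Q : Set (ℝ × ℝ)) (hQ : Q = Set.Ioo a (a + s) ×ˢ Set.Ioo b (b + s))
    (τ : ℕ) (hτ : (Q ∩ Qr κ τ).Nonempty) :
    (∀ i : ℕ, τ + 1 ≤ i → (Q ∩ Qr κ i).Nonempty →
      κ ^ (-(τ : ℤ)) / 4 ≤ s ∧
      volume (Q ∩ Qr κ i) ≤
        ENNReal.ofReal (4 * κ ^ (2 * (τ : ℤ) - 2 * (i : ℤ))) * volume Q) ∧
    ∑' i : ℕ, volume (Q ∩ Qr κ (τ + 1 + i)) ≤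
      ENNReal.ofReal (4 / (κ ^ 2 - 1)) * volume Q := by
  have hside : ∀ i : ℕ, τ + 1 ≤ i → (Q ∩ Qr κ i).Nonempty → κ ^ (-(τ : ℤ)) / 4 ≤ s := by
    subst hQ
    exact fun i hi ↦ zpow_neg_div_four_le_side hκ hi hτ
  have hvol : ∀ i : ℕ, τ + 1 ≤ i → (Q ∩ Qr κ i).Nonempty →
      volume (Q ∩ Qr κ i) ≤ ENNReal.ofReal (4 * κ ^ (2 * (τ : ℤ) - 2 * (i : ℤ))) * volume Q := by
    subst hQ
    exact fun i hi hQi ↦ volume_inter_Qr_le (by linarith) (hside i hi hQi) i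
  refine ⟨fun i hi hQi ↦ ⟨hside i hi hQi, hvol i hi hQi⟩, ?_⟩
  have hgeo := hasSum_four_mul_zpow (by linarith) τ
  calc ∑' i : ℕ, volume (Q ∩ Qr κ (τ + 1 + i))
      ≤ ∑' i : ℕ,
          ENNReal.ofReal (4 * κ ^ (2 * (τ : ℤ) - 2 * ((τ + 1 + i : ℕ) : ℤ))) * volume Q := by
        refine ENNReal.tsum_le_tsum fun i ↦ ?_
        rcases eq_empty_or_nonempty (Q ∩ Qr κ (τ + 1 + i)) with h | h
        · simp [h]
        · exact hvol _ (by omega) h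
    _ = ENNReal.ofReal (4 / (κ ^ 2 - 1)) * volume Q := by
        rw [ENNReal.tsum_mul_right, ← ENNReal.ofReal_tsum_of_nonneg (fun _ ↦ by positivity)
          hgeo.summable, hgeo.tsum_eq]

theorem stmt10 (κ : ℝ) (hκ : 4 ≤ κ) (a b s : ℝ) (hs : 0 < s)
    (Q : Set (ℝ × ℝ)) (hQ : Q = Set.Ioo a (a + s) ×ˢ Set.Ioo b (b + s))
    (τ : ℕ) (hτ : (Q ∩ Qr κ τ).Nonempty) (hmin : ∀ k : ℕ, k < τ → Q ∩ Qr κ k = ∅) :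
    (∀ i : ℕ, τ + 1 ≤ i → (Q ∩ Qr κ i).Nonempty →
      κ ^ (-(τ : ℤ)) / 4 ≤ s ∧
      volume (Q ∩ Qr κ i) ≤
        ENNReal.ofReal (4 * κ ^ (2 * (τ : ℤ) - 2 * (i : ℤ))) * volume Q) ∧
    ∑' i : ℕ, volume (Q ∩ Qr κ (τ + 1 + i)) ≤
      ENNReal.ofReal (4 / (κ ^ 2 - 1)) * volume Q :=
  stmt10_general κ hκ a b s Q hQ τ hτ
end

section
/- Agmon's lowering trick: let p ∈ (1,∞), ζ ∈ C_0^∞(ℝ) with ζ ≢ 0. Then the quantity ∫_ℝ |ζ(y) cos(μy)|^p dy is bounded away from zero uniformly in μ ∈ ℝ, i.e., there is a constant c > 0 depending only on ζ and p such that ∫_ℝ |ζ(y) cos(μy)|^p dy ≥ c for all μ ∈ ℝ. -/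
open MeasureTheory

theorem stmt15 (p : ℝ) (hp : 1 < p) (ζ : ℝ → ℝ) (hζ : ContDiff ℝ (⊤ : ℕ∞) ζ)
    (hsupp : HasCompactSupport ζ) (hne : ζ ≠ 0) :
    ∃ c : ℝ, 0 < c ∧ ∀ μ : ℝ, c ≤ ∫ y : ℝ, |ζ y * Real.cos (μ * y)| ^ p := by
  have hp0 : (0:ℝ) < p := lt_trans one_pos hp
  have hζc : Continuous ζ := hζ.continuous
  set f : ℝ → ℝ → ℝ := fun μ y => |ζ y * Real.cos (μ * y)| ^ p with hfdef
  have hnonneg : ∀ μ y, 0 ≤ f μ y := fun μ y => Real.rpow_nonneg (abs_nonneg _) p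
  have hcont2 : ∀ μ, Continuous (f μ) := fun μ =>
    ((hζc.mul (Real.continuous_cos.comp (continuous_const.mul continuous_id))).abs).rpow_const
      (fun y => Or.inr hp0.le)
  have hboundc : Continuous (fun y => |ζ y| ^ p) :=
    (hζc.abs).rpow_const (fun y => Or.inr hp0.le)
  have hbound_supp : HasCompactSupport (fun y => |ζ y| ^ p) := by
    apply hsupp.comp_left (g := fun x : ℝ => |x| ^ p)
    simp [Real.zero_rpow hp0.ne']
  have hbound_int : Integrable (fun y => |ζ y| ^ p) :=
    hboundc.integrable_of_hasCompactSupport hbound_supp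
  have hle : ∀ μ y, f μ y ≤ |ζ y| ^ p := by
    intro μ y
    apply Real.rpow_le_rpow (abs_nonneg _) _ hp0.le
    rw [abs_mul]
    exact mul_le_of_le_one_right (abs_nonneg _) (Real.abs_cos_le_one _)
  have hint : ∀ μ, Integrable (f μ) := by
    intro μ
    refine hbound_int.mono' ((hcont2 μ).aestronglyMeasurable) ?_
    filter_upwards with y
    rw [Real.norm_of_nonneg (hnonneg μ y)]
    exact hle μ y
  set F : ℝ → ℝ := fun μ => ∫ y, f μ y with hFdef
  -- continuity of F
  have hFcont : Continuous F := by
    refine continuous_of_dominated (bound := fun y => |ζ y| ^ p)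
      (fun μ => (hcont2 μ).aestronglyMeasurable) ?_ hbound_int ?_
    · intro μ
      filter_upwards with y
      rw [Real.norm_of_nonneg (hnonneg μ y)]
      exact hle μ y
    · filter_upwards with y
      exact ((continuous_const.mul
        (Real.continuous_cos.comp (continuous_id.mul continuous_const))).abs).rpow_const
        (fun _ => Or.inr hp0.le)
  -- positivity of F at each point
  have hFpos : ∀ μ, 0 < F μ := by
    intro μ
    rw [hFdef]
    rw [integral_pos_iff_support_of_nonneg (fun y => hnonneg μ y) (hint μ)]
    have hZ : volume {y : ℝ | Real.cos (μ * y) = 0} = 0 := by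
      rcases eq_or_ne μ 0 with h | h
      · simp [h]
      · apply Set.Countable.measure_zero
        have hsub : {y : ℝ | Real.cos (μ * y) = 0} ⊆
            Set.range (fun k : ℤ => ((2 * (k:ℝ) + 1) * Real.pi / 2) / μ) := by
          intro y hy
          rw [Set.mem_setOf_eq, Real.cos_eq_zero_iff] at hy
          obtain ⟨k, hk⟩ := hy
          refine ⟨k, ?_⟩
          show (2 * (k:ℝ) + 1) * Real.pi / 2 / μ = y
          rw [div_eq_iff h, ← hk]
          ring
        exact (Set.countable_range _).mono hsub
    have hsub : Function.support ζ \ {y | Real.cos (μ * y) = 0} ⊆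
        Function.support (f μ) := by
      rintro y ⟨hy1, hy2⟩
      rw [Set.mem_setOf_eq] at hy2
      rw [Function.mem_support] at hy1 ⊢
      have hx : ζ y * Real.cos (μ * y) ≠ 0 := mul_ne_zero hy1 hy2
      exact ne_of_gt (Real.rpow_pos_of_pos (abs_pos.mpr hx) p)
    calc (0:ENNReal) < volume (Function.support ζ) :=
          (hζc.isOpen_support).measure_pos volume (Function.support_nonempty_iff.mpr hne)
      _ = volume (Function.support ζ \ {y | Real.cos (μ * y) = 0}) :=
          (measure_diff_null hZ).symm
      _ ≤ volume (Function.support (f μ)) := measure_mono hsub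
  -- symmetry in μ
  have hFabs : ∀ μ : ℝ, F μ = F |μ| := by
    intro μ
    rcases abs_choice μ with h | h
    · rw [h]
    · rw [h]
      show (∫ y, f μ y) = ∫ y, f (-μ) y
      congr 1
      funext y
      show |ζ y * Real.cos (μ * y)| ^ p = |ζ y * Real.cos (-μ * y)| ^ p
      rw [neg_mul, Real.cos_neg]
  -- an interval where |ζ| is bounded below
  obtain ⟨y₀, hy₀⟩ : ∃ y, ζ y ≠ 0 := by
    by_contra h
    push_neg at h
    exact hne (funext fun y => h y)
  have hε0 : 0 < |ζ y₀| / 2 := by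
    have := abs_pos.mpr hy₀; linarith
  obtain ⟨δ, hδ0, hball⟩ : ∃ δ > 0, Metric.ball y₀ δ ⊆ {y | |ζ y₀| / 2 < |ζ y|} := by
    have hopen : IsOpen {y | |ζ y₀| / 2 < |ζ y|} :=
      isOpen_lt continuous_const hζc.abs
    have hmem : y₀ ∈ {y | |ζ y₀| / 2 < |ζ y|} := by
      simp only [Set.mem_setOf_eq]
      have := abs_pos.mpr hy₀; linarith
    exact Metric.isOpen_iff.mp hopen y₀ hmem
  set ε := |ζ y₀| / 2 with hεdef
  set a := y₀ - δ / 2 with hadef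
  set b := y₀ + δ / 2 with hbdef
  have hab : a < b := by simp only [hadef, hbdef]; linarith
  have hζab : ∀ y ∈ Set.Icc a b, ε ≤ |ζ y| := by
    intro y hy
    have : y ∈ Metric.ball y₀ δ := by
      rw [Metric.mem_ball, Real.dist_eq]
      rcases hy with ⟨h1, h2⟩
      rw [abs_lt]
      constructor <;> simp only [hadef, hbdef] at h1 h2 <;> linarith
    exact (hball this).le
  set L := b - a with hLdef
  have hL0 : 0 < L := by simp only [hLdef]; linarith
  set q := (Real.sqrt 2)⁻¹ ^ p with hqdef
  have hsqrt2 : (0:ℝ) < Real.sqrt 2 := Real.sqrt_pos.mpr (by norm_num)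
  have hq0 : 0 < q := Real.rpow_pos_of_pos (by positivity) p
  set c₁ := ε ^ p * (L / 4 * q) with hc₁def
  have hεp0 : 0 < ε ^ p := Real.rpow_pos_of_pos hε0 p
  have hc₁ : 0 < c₁ := by positivity
  -- the pointwise key inequality
  have hkey : ∀ t : ℝ, q ≤ |Real.cos t| ^ p + |Real.sin t| ^ p := by
    intro t
    set m := max |Real.cos t| |Real.sin t| with hmdef
    have hm0 : 0 ≤ m := le_trans (abs_nonneg _) (le_max_left _ _)
    have hm : (Real.sqrt 2)⁻¹ ≤ m := by
      have h2 : (2:ℝ)⁻¹ ≤ m ^ 2 := by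
        have h1 := Real.sin_sq_add_cos_sq t
        have hc : Real.cos t ^ 2 ≤ m ^ 2 := by
          rw [← sq_abs (Real.cos t)]
          exact pow_le_pow_left₀ (abs_nonneg _) (le_max_left _ _) 2
        have hs : Real.sin t ^ 2 ≤ m ^ 2 := by
          rw [← sq_abs (Real.sin t)]
          exact pow_le_pow_left₀ (abs_nonneg _) (le_max_right _ _) 2
        nlinarith
      have : Real.sqrt 2⁻¹ ≤ Real.sqrt (m ^ 2) := Real.sqrt_le_sqrt h2
      rwa [Real.sqrt_sq hm0, Real.sqrt_inv] at this
    have hmp : m ^ p ≤ |Real.cos t| ^ p + |Real.sin t| ^ p := by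
      rcases max_choice |Real.cos t| |Real.sin t| with h | h
      · rw [hmdef, h]
        exact le_add_of_nonneg_right (Real.rpow_nonneg (abs_nonneg _) _)
      · rw [hmdef, h]
        exact le_add_of_nonneg_left (Real.rpow_nonneg (abs_nonneg _) _)
    exact le_trans (Real.rpow_le_rpow (by positivity) hm hp0.le) hmp
  -- tail bound
  have htail : ∀ μ : ℝ, Real.pi / L ≤ μ → c₁ ≤ F μ := by
    intro μ hμ
    have hπ := Real.pi_pos
    have hμ0 : 0 < μ := lt_of_lt_of_le (by positivity) hμ
    set s := Real.pi / (2 * μ) with hsdef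
    have hs0 : 0 < s := by positivity
    have hμL : Real.pi ≤ μ * L := by
      rw [div_le_iff₀ hL0] at hμ
      linarith
    have hsL : s ≤ L / 2 := by
      rw [hsdef, div_le_div_iff₀ (by positivity) (by norm_num)]
      nlinarith
    set g : ℝ → ℝ := fun y => |Real.cos (μ * y)| ^ p with hgdef
    have hgc : Continuous g :=
      ((Real.continuous_cos.comp (continuous_const.mul continuous_id)).abs).rpow_const
        (fun _ => Or.inr hp0.le)
    have hgnn : ∀ y, 0 ≤ g y := fun y => Real.rpow_nonneg (abs_nonneg _) p
    have hsinc : Continuous (fun y => |Real.sin (μ * y)| ^ p) :=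
      ((Real.continuous_sin.comp (continuous_const.mul continuous_id)).abs).rpow_const
        (fun _ => Or.inr hp0.le)
    have hμs : μ * s = Real.pi / 2 := by
      rw [hsdef]
      field_simp
    have hid : ∀ y : ℝ, |Real.sin (μ * y)| ^ p = g (y - s) := by
      intro y
      rw [hgdef]
      simp only
      rw [mul_sub, hμs, Real.cos_sub_pi_div_two]
    -- the sum bound on the interval [a+s, b]
    have haslb : a + s ≤ b := by
      have : s ≤ L := le_trans hsL (by linarith)
      simp only [hLdef] at this
      linarith
    have hsum : (b - (a + s)) * q ≤
        ∫ y in (a+s)..b, (g y + |Real.sin (μ * y)| ^ p) := by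
      have hconst : ∫ _ in (a+s)..b, q = (b - (a + s)) * q := by
        rw [intervalIntegral.integral_const, smul_eq_mul]
      rw [← hconst]
      apply intervalIntegral.integral_mono_on haslb
        (intervalIntegrable_const) ((hgc.add hsinc).intervalIntegrable _ _)
      intro x _
      exact hkey (μ * x)
    have hsplit : ∫ y in (a+s)..b, (g y + |Real.sin (μ * y)| ^ p)
        = (∫ y in (a+s)..b, g y) + ∫ y in (a+s)..b, |Real.sin (μ * y)| ^ p :=
      intervalIntegral.integral_add (hgc.intervalIntegrable _ _)
        (hsinc.intervalIntegrable _ _)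
    have htrans : ∫ y in (a+s)..b, |Real.sin (μ * y)| ^ p = ∫ y in a..(b-s), g y := by
      have : ∫ y in (a+s)..b, |Real.sin (μ * y)| ^ p = ∫ y in (a+s)..b, g (y - s) := by
        apply intervalIntegral.integral_congr
        intro y _
        exact hid y
      rw [this, intervalIntegral.integral_comp_sub_right g s, add_sub_cancel_right]
    have hgint : IntervalIntegrable g volume a b := hgc.intervalIntegrable _ _
    have hgnn' : 0 ≤ᵐ[volume.restrict (Set.Ioc a b)] g :=
      Filter.Eventually.of_forall hgnn
    have hJ : ∫ y in (a+s)..b, g y ≤ ∫ y in a..b, g y :=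
      intervalIntegral.integral_mono_interval (by linarith) haslb le_rfl hgnn' hgint
    have hK : ∫ y in a..(b-s), g y ≤ ∫ y in a..b, g y :=
      intervalIntegral.integral_mono_interval le_rfl (by linarith) (by linarith) hgnn' hgint
    have hIab : L / 4 * q ≤ ∫ y in a..b, g y := by
      clear_value a b L s q
      have h1 : (b - (a + s)) * q ≤ 2 * ∫ y in a..b, g y := by
        calc (b - (a + s)) * q ≤ ∫ y in (a+s)..b, (g y + |Real.sin (μ * y)| ^ p) := hsum
          _ = (∫ y in (a+s)..b, g y) + ∫ y in a..(b-s), g y := by rw [hsplit, htrans]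
          _ ≤ 2 * ∫ y in a..b, g y := by linarith
      have hLba : L = b - a := hLdef
      have h2 : L / 2 * q ≤ (b - (a + s)) * q := by
        apply mul_le_mul_of_nonneg_right _ hq0.le
        linarith [hsL, hLba]
      linarith [h1, h2]
    -- lower bound of f μ on [a,b]
    have hfg : ∀ y ∈ Set.Icc a b, ε ^ p * g y ≤ f μ y := by
      intro y hy
      rw [hfdef, hgdef]
      simp only
      rw [abs_mul, Real.mul_rpow (abs_nonneg _) (abs_nonneg _)]
      apply mul_le_mul_of_nonneg_right _ (Real.rpow_nonneg (abs_nonneg _) p)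
      exact Real.rpow_le_rpow hε0.le (hζab y hy) hp0.le
    have hfab : ε ^ p * (L / 4 * q) ≤ ∫ y in a..b, f μ y := by
      calc ε ^ p * (L / 4 * q) ≤ ε ^ p * ∫ y in a..b, g y := by
            apply mul_le_mul_of_nonneg_left hIab hεp0.le
        _ = ∫ y in a..b, ε ^ p * g y := by
            rw [intervalIntegral.integral_const_mul]
        _ ≤ ∫ y in a..b, f μ y := by
            apply intervalIntegral.integral_mono_on hab.le
              ((continuous_const.mul hgc).intervalIntegrable _ _)
              ((hcont2 μ).intervalIntegrable _ _) hfg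
    have hFge : ∫ y in a..b, f μ y ≤ F μ := by
      rw [intervalIntegral.integral_of_le hab.le]
      exact setIntegral_le_integral (hint μ) (Filter.Eventually.of_forall (hnonneg μ))
    calc c₁ = ε ^ p * (L / 4 * q) := rfl
      _ ≤ ∫ y in a..b, f μ y := hfab
      _ ≤ F μ := hFge
  -- compact part
  set μ₀ := Real.pi / L with hμ₀def
  have hμ₀0 : 0 < μ₀ := by
    have := Real.pi_pos
    positivity
  obtain ⟨μs, hμs_mem, hμs_min⟩ :=
    (isCompact_Icc (a := -μ₀) (b := μ₀)).exists_isMinOn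
      (Set.nonempty_Icc.mpr (by linarith)) hFcont.continuousOn
  refine ⟨min c₁ (F μs), lt_min hc₁ (hFpos μs), fun μ => ?_⟩
  rcases le_or_gt μ₀ |μ| with h | h
  · calc min c₁ (F μs) ≤ c₁ := min_le_left _ _
      _ ≤ F |μ| := htail _ h
      _ = F μ := (hFabs μ).symm
  · have hmem : μ ∈ Set.Icc (-μ₀) μ₀ := by
      rcases abs_le.mp h.le with ⟨h1, h2⟩
      exact ⟨h1, h2⟩
    exact le_trans (min_le_right _ _) (hμs_min hmem)
end
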